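/- With the signature cancellation rule: if w is a word in {+, −} and w' is obtained from w by changing the leftmost uncanceled − into a +, then the uncanceled symbols of w' are exactly those of w with that − replaced by +; in particular the number of uncanceled − symbols of w' is one less than that of w, and the number of uncanceled + symbols is one more. -/

import Mathlib

/-- Symbols of a signature word. -/
inductive PMSym | plus | minus | blank
deriving DecidableEq, Repr

/-- Signature reduction keeping positions: blanks are dropped and adjacent `-+` pairs cancel;
the result lists the uncanceled symbols together with their positions and has the
form `+ ⋯ + - ⋯ -`. -/
def redIdx : List (ℕ × PMSym) → List (ℕ × PMSym)
  | [] => []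
  | p :: xs =>
    let r := redIdx xs
    match p.2 with
    | PMSym.blank => r
    | PMSym.plus => p :: r
    | PMSym.minus =>
      match r with
      | q :: r' => if q.2 = PMSym.plus then r' else p :: r
      | [] => [p]

/-- One step of signature reduction: `(p, m) = (#uncanceled +, #uncanceled -)` so far. -/
def sigStep : ℕ × ℕ → PMSym → ℕ × ℕ
  | (p, m), PMSym.plus => if 0 < m then (p, m - 1) else (p + 1, m)
  | (p, m), PMSym.minus => (p, m + 1)
  | (p, m), PMSym.blank => (p, m)

/-- `sig w = (φ, ε)`: the numbers of uncanceled `+` and `-` symbols of `w`. -/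
def sig (w : List PMSym) : ℕ × ℕ := w.foldl sigStep (0, 0)

/-!
Reduction runs from the right: `redIdx (p :: l) = rstep p (redIdx l)`. Write `w = u ++ - :: v`
with the chosen `-` at position `k`. Since this `-` survives, the reduction of `v` does not start
with `+`, so `redIdx w = redIdx u ++ - :: redIdx v`. Since it is the leftmost surviving `-`,
`redIdx u` consists of `+` only, and a word whose reduction has no `-` reduces independently of
what follows it; hence `redIdx w' = redIdx u ++ + :: redIdx v`.
-/

open List

def rstep (p : ℕ × PMSym) (r : List (ℕ × PMSym)) : List (ℕ × PMSym) :=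
  match p.2 with
  | PMSym.blank => r
  | PMSym.plus => p :: r
  | PMSym.minus =>
    match r with
    | q :: r' => if q.2 = PMSym.plus then r' else p :: r
    | [] => [p]

theorem redIdx_cons (p : ℕ × PMSym) (l : List (ℕ × PMSym)) :
    redIdx (p :: l) = rstep p (redIdx l) := rfl

theorem rstep_sublist (p : ℕ × PMSym) (r : List (ℕ × PMSym)) : (rstep p r).Sublist (p :: r) := by
  rcases p with ⟨i, _ | _ | _⟩ <;> rcases r with _ | ⟨q, r⟩ <;> simp only [rstep]
  all_goals first
    | exact Sublist.refl _
    | exact sublist_cons_self _ _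
    | split_ifs
      · exact (sublist_cons_self _ _).trans (sublist_cons_self _ _)
      · exact Sublist.refl _

theorem rstep_append {p : ℕ × PMSym} {r s : List (ℕ × PMSym)}
    (h : r = [] → p.2 = PMSym.minus → ∀ q ∈ s.head?, q.2 ≠ PMSym.plus) :
    rstep p (r ++ s) = rstep p r ++ s := by
  rcases p with ⟨i, _ | _ | _⟩ <;> rcases r with _ | ⟨q, r⟩ <;> try rfl
  · rcases s with _ | ⟨q, s⟩
    · rfl
    · simp [rstep, h rfl rfl q rfl]
  · simp only [rstep, cons_append]
    split_ifs <;> rfl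

theorem forall_ne_minus_of_rstep {p : ℕ × PMSym} {r : List (ℕ × PMSym)}
    (h : ∀ q ∈ rstep p r, q.2 ≠ PMSym.minus) :
    (∀ q ∈ r, q.2 ≠ PMSym.minus) ∧ (r = [] → p.2 ≠ PMSym.minus) := by
  rcases p with ⟨i, _ | _ | _⟩ <;> rcases r with _ | ⟨q, r⟩ <;> simp only [rstep] at h
  all_goals try split_ifs at h
  all_goals aesop

theorem redIdx_append_sublist (A B : List (ℕ × PMSym)) :
    (redIdx (A ++ B)).Sublist (A ++ redIdx B) := by
  induction A with
  | nil => exact Sublist.refl _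
  | cons a A ih => exact (rstep_sublist a _).trans (ih.cons_cons a)

theorem redIdx_sublist (l : List (ℕ × PMSym)) : (redIdx l).Sublist l := by
  simpa [redIdx] using redIdx_append_sublist l []

theorem redIdx_append_of_head {A B : List (ℕ × PMSym)}
    (hB : ∀ q ∈ (redIdx B).head?, q.2 ≠ PMSym.plus) :
    redIdx (A ++ B) = redIdx A ++ redIdx B := by
  induction A with
  | nil => rfl
  | cons a A ih => rw [cons_append, redIdx_cons, ih, redIdx_cons, rstep_append fun _ _ => hB]

theorem redIdx_append_of_forall_ne_minus {A B : List (ℕ × PMSym)}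
    (hA : ∀ p ∈ redIdx A, p.2 ≠ PMSym.minus) :
    redIdx (A ++ B) = redIdx A ++ redIdx B := by
  induction A with
  | nil => rfl
  | cons a A ih =>
    obtain ⟨hA', hnil⟩ := forall_ne_minus_of_rstep hA
    rw [cons_append, redIdx_cons, ih hA', redIdx_cons, rstep_append fun h ha => absurd ha (hnil h)]

theorem rstep_minus_of_head {i : ℕ} {r : List (ℕ × PMSym)}
    (h : ∀ q ∈ r.head?, q.2 ≠ PMSym.plus) : rstep (i, PMSym.minus) r = (i, PMSym.minus) :: r := by
  rcases r with _ | ⟨q, r⟩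
  · rfl
  · simp [rstep, h q rfl]

theorem redIdx_append_minus_cons {A B : List (ℕ × PMSym)} {i : ℕ}
    (hA : (i, PMSym.minus) ∉ A) (hB : (i, PMSym.minus) ∉ B)
    (h : (i, PMSym.minus) ∈ redIdx (A ++ (i, PMSym.minus) :: B)) :
    redIdx (A ++ (i, PMSym.minus) :: B) = redIdx A ++ (i, PMSym.minus) :: redIdx B := by
  have hhead : ∀ q ∈ (redIdx B).head?, q.2 ≠ PMSym.plus := by
    intro q hq hplus
    obtain ⟨r, hr⟩ : ∃ r, redIdx B = q :: r := ⟨_, (cons_head?_tail hq).symm⟩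
    have hcancel : redIdx ((i, PMSym.minus) :: B) = r := by simp [redIdx_cons, hr, rstep, hplus]
    have hrB : r ⊆ B := fun x hx => (redIdx_sublist B).subset (hr ▸ mem_cons_of_mem q hx)
    rcases mem_append.1 ((redIdx_append_sublist A _).subset h) with h | h
    · exact hA h
    · exact hB (hrB (hcancel ▸ h))
  rw [redIdx_append_of_head (by simp [redIdx_cons, rstep_minus_of_head hhead]), redIdx_cons,
    rstep_minus_of_head hhead]

theorem forall_not_of_find?_append_cons_eq_some {α : Type*} {f : α → Bool} {L M : List α} {a : α}
    (h : (L ++ a :: M).find? f = some a) (ha : a ∉ L) : ∀ x ∈ L, ¬f x := by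
  rw [find?_append] at h
  cases hL : L.find? f with
  | none => exact find?_eq_none.1 hL
  | some x =>
    rw [hL, Option.some_or, Option.some_inj] at h
    exact absurd (h ▸ mem_of_find?_eq_some hL) ha

theorem mem_map_swap_zipIdx {α : Type*} {l : List α} {n : ℕ} {p : ℕ × α}
    (h : p ∈ (l.zipIdx n).map Prod.swap) : n ≤ p.1 ∧ p.1 < n + l.length := by
  obtain ⟨⟨x, j⟩, hj, rfl⟩ := mem_map.1 h
  exact ⟨(mem_zipIdx hj).1, (mem_zipIdx hj).2.1⟩

theorem map_swap_zipIdx_append_cons {α : Type*} (u v : List α) (s : α) :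
    (u ++ s :: v).zipIdx.map Prod.swap =
      u.zipIdx.map Prod.swap ++ (u.length, s) :: (v.zipIdx (u.length + 1)).map Prod.swap := by
  simp [zipIdx_append, zipIdx_cons]

theorem exists_eq_append_cons_of_mem_map_swap_zipIdx {α : Type*} {w : List α} {k : ℕ} {x : α}
    (h : (k, x) ∈ w.zipIdx.map Prod.swap) : ∃ u v, w = u ++ x :: v ∧ u.length = k := by
  obtain ⟨hk, hx⟩ := mem_zipIdx' (by simpa using h)
  refine ⟨w.take k, w.drop (k + 1), ?_, by simp [hk.le]⟩
  rw [hx, ← drop_eq_getElem_cons hk, take_append_drop]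

theorem stmt6_general (w : List PMSym) (k : ℕ)
    (hk : (redIdx (w.zipIdx.map Prod.swap)).find? (fun p => p.2 == PMSym.minus) = some (k, PMSym.minus)) :
    redIdx (((w.set k PMSym.plus).zipIdx.map Prod.swap)) =
      (redIdx (w.zipIdx.map Prod.swap)).map (fun p => if p.1 = k then (k, PMSym.plus) else p) ∧
    ((redIdx (((w.set k PMSym.plus).zipIdx.map Prod.swap))).filter (fun p => p.2 == PMSym.minus)).length
      = ((redIdx (w.zipIdx.map Prod.swap)).filter (fun p => p.2 == PMSym.minus)).length - 1 ∧
    ((redIdx (((w.set k PMSym.plus).zipIdx.map Prod.swap))).filter (fun p => p.2 == PMSym.plus)).length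
      = ((redIdx (w.zipIdx.map Prod.swap)).filter (fun p => p.2 == PMSym.plus)).length + 1 := by
  obtain ⟨u, v, rfl, rfl⟩ := exists_eq_append_cons_of_mem_map_swap_zipIdx
    ((redIdx_sublist _).subset (mem_of_find?_eq_some hk))
  rw [set_append_right _ _ le_rfl, Nat.sub_self, set_cons_zero]
  rw [map_swap_zipIdx_append_cons] at hk ⊢
  rw [map_swap_zipIdx_append_cons]
  set A := u.zipIdx.map Prod.swap
  set B := (v.zipIdx (u.length + 1)).map Prod.swap
  have hA : ∀ p ∈ A, p.1 < u.length := fun p hp => by simpa using (mem_map_swap_zipIdx hp).2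
  have hB : ∀ p ∈ B, u.length < p.1 := fun p hp => (mem_map_swap_zipIdx hp).1
  have hminus := redIdx_append_minus_cons (A := A) (B := B) (fun h => (hA _ h).ne rfl)
    (fun h => (hB _ h).ne rfl) (mem_of_find?_eq_some hk)
  have hredA : ∀ p ∈ redIdx A, p.1 < u.length := fun p hp => hA p ((redIdx_sublist A).subset hp)
  have hredB : ∀ p ∈ redIdx B, u.length < p.1 := fun p hp => hB p ((redIdx_sublist B).subset hp)
  have hAplus : ∀ p ∈ redIdx A, p.2 ≠ PMSym.minus := by
    rw [hminus] at hk
    simpa using forall_not_of_find?_append_cons_eq_some hk fun h => (hredA _ h).ne rfl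
  have hplus : redIdx (A ++ (u.length, PMSym.plus) :: B) =
      redIdx A ++ (u.length, PMSym.plus) :: redIdx B :=
    redIdx_append_of_forall_ne_minus hAplus
  have hfix : ∀ l : List (ℕ × PMSym), (∀ p ∈ l, p.1 ≠ u.length) →
      l.map (fun p => if p.1 = u.length then (u.length, PMSym.plus) else p) = l :=
    fun l hl => (map_congr_left fun p hp => if_neg (hl p hp)).trans (map_id l)
  have hAfilter : (redIdx A).filter (fun p => p.2 == PMSym.minus) = [] := by
    simpa [filter_eq_nil_iff] using hAplus
  rw [hminus, hplus]
  refine ⟨?_, by simp [hAfilter], by simp; omega⟩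
  simp [hfix _ fun p hp => (hredA p hp).ne, hfix _ fun p hp => (hredB p hp).ne']

/-- If `w'` is obtained from a word `w` in `{+, -}` by changing the leftmost uncanceled `-`
(at position `k`) into a `+`, then the uncanceled symbols of `w'` are exactly those of `w`
with that `-` replaced by `+`; in particular the number of uncanceled `-` symbols drops
by one and the number of uncanceled `+` symbols rises by one. -/
theorem stmt6 (w : List PMSym) (hb : PMSym.blank ∉ w) (k : ℕ)
    (hk : (redIdx (w.zipIdx.map Prod.swap)).find? (fun p => p.2 == PMSym.minus) = some (k, PMSym.minus)) :
    redIdx (((w.set k PMSym.plus).zipIdx.map Prod.swap)) =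
      (redIdx (w.zipIdx.map Prod.swap)).map (fun p => if p.1 = k then (k, PMSym.plus) else p) ∧
    ((redIdx (((w.set k PMSym.plus).zipIdx.map Prod.swap))).filter (fun p => p.2 == PMSym.minus)).length
      = ((redIdx (w.zipIdx.map Prod.swap)).filter (fun p => p.2 == PMSym.minus)).length - 1 ∧
    ((redIdx (((w.set k PMSym.plus).zipIdx.map Prod.swap))).filter (fun p => p.2 == PMSym.plus)).length
      = ((redIdx (w.zipIdx.map Prod.swap)).filter (fun p => p.2 == PMSym.plus)).length + 1 :=
  stmt6_general w k hk
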